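/- arXiv:math/0305409 — 5 statements merged into one kernel-verified Lean document; each statement's English description precedes it below -/
import Mathlib

section
/- Let M be a module over a commutative ring R and let A, B : M → M be R-linear endomorphisms satisfying the commutation relation A∘B − B∘A = B. Define l_m := A∘(B∘A)^m for m ∈ ℕ. Then for all m, n ∈ ℕ one has l_m∘l_n − l_n∘l_m = (n − m) • l_{m+n} (integer scalar action); that is, the operators l_m commute as the vector fields x^{m+1} d/dx on the line. -/
/-- If `A`, `B` are endomorphisms with `A∘B − B∘A = B`, then the
operators `l_m = A ∘ (B∘A)^m` satisfy the Virasoro (Witt) commutation relations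
`l_m∘l_n − l_n∘l_m = (n − m) • l_{m+n}`. -/
theorem alternating_composition_virasoro
    {R M : Type*} [CommRing R] [AddCommGroup M] [Module R M]
    (A B : Module.End R M) (h : A * B - B * A = B) (m n : ℕ) :
    (A * (B * A) ^ m) * (A * (B * A) ^ n) - (A * (B * A) ^ n) * (A * (B * A) ^ m)
      = ((n : ℤ) - (m : ℤ)) • (A * (B * A) ^ (m + n)) := by
  set T := B * A with hT
  have hAB : A * B = B * A + B := by
    have := sub_eq_iff_eq_add.mp h
    rw [this, hT]; exact add_comm _ _
  have hAT : A * T = T * A + T := by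
    rw [hT, ← mul_assoc, hAB, add_mul]
  have key : ∀ k : ℕ, A * T ^ k = T ^ k * A + (k : ℤ) • T ^ k := by
    intro k
    induction k with
    | zero => simp
    | succ k ih =>
      have h1 : A * T ^ (k + 1) = (A * T) * T ^ k := by
        rw [pow_succ', ← mul_assoc]
      rw [h1, hAT, add_mul, mul_assoc, ih]
      push_cast
      rw [pow_succ', mul_add, mul_smul_comm, add_smul, one_smul, ← mul_assoc]
      abel
  have e : ∀ p q : ℕ, A * T ^ p * (A * T ^ q)
      = A * T ^ (p + q) * A + (q : ℤ) • (A * T ^ (p + q)) := by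
    intro p q
    rw [mul_assoc, key q, pow_add]
    simp only [mul_add, mul_smul_comm, mul_assoc]
  rw [e m n, e n m, Nat.add_comm n m, sub_smul]
  abel
end

section
/- Let H be a finite-dimensional vector space over a field K of characteristic zero with a symmetric bilinear form B, and let 𝓗 and Ω be as in the context. Let a = ∑_{n∈ℤ} a_n zⁿ be a formal Laurent series with coefficients a_n ∈ End(H) and support bounded below, and assume each a_n admits a B-adjoint a_n^* (meaning B(a_n x, y) = B(x, a_n^* y) for all x, y ∈ H) satisfying a_n^* = (−1)^{n+1} a_n, i.e. a^*(−z) + a(z) = 0 (a belongs to the twisted loop Lie algebra). Then the multiplication operator f ↦ a·f on 𝓗, defined by (a·f)_n = ∑_{k+l=n} a_k(f_l), is Ω-anti-symmetric: Ω(a·f, g) + Ω(f, a·g) = 0 for all f, g ∈ 𝓗. In particular, multiplication by z⁻¹ (the case a = z⁻¹·id, defining the string flow) is Ω-anti-symmetric. -/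
/-- Givental's symplectic form `Ω(f,g) = ∑_{i+j=−1} (−1)^i B(f_i, g_j)` on the
loop space of Hahn series over `ℤ` with coefficients in `H`. -/
noncomputable def giventalForm {K H : Type*} [Field K] [AddCommGroup H] [Module K H]
    (B : LinearMap.BilinForm K H) (f g : HahnSeries ℤ H) : K :=
  ∑ᶠ i : ℤ, (-1 : K) ^ i * B (f.coeff i) (g.coeff (-1 - i))

/-!
Both `Ω(a·f, g)` and `Ω(f, a·g)` are double sums over the indices `(j, k)` of `f_j` and `a_k`;
they are finite because all supports are bounded below, so the inner sum may be pulled out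
of `B` and reindexed by `i = j + k`. The twisted condition `a_k^* = (-1)^(k+1) a_k` says
`B(a_k x, y) = (-1)^(k+1) B(x, a_k y)`, which makes the two double sums termwise opposite.
Multiplication by `z⁻¹` is the case `a = z⁻¹ · id`.
-/

open Function

theorem finsum_finsum_comp_sub_eq {M : Type*} [AddCommMonoid M] (u : ℤ × ℤ → M)
    (hu : HasFiniteSupport u) : ∑ᶠ (i : ℤ) (k : ℤ), u (i - k, k) = ∑ᶠ (j : ℤ) (k : ℤ), u (j, k) := by
  let e : ℤ × ℤ ≃ ℤ × ℤ :=
    { toFun := fun p => (p.1 - p.2, p.2)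
      invFun := fun p => (p.1 + p.2, p.2)
      left_inv := fun p => by simp
      right_inv := fun p => by simp }
  have hue : HasFiniteSupport (u ∘ e) := by
    rw [HasFiniteSupport, support_comp_eq_preimage]
    exact hu.preimage e.injective.injOn
  rw [← finsum_curry u hu, ← finsum_comp_equiv e]
  exact (finsum_curry (u ∘ e) hue).symm

namespace HahnSeries

variable {M N P : Type*}

theorem finite_setOf_coeff_ne_zero_and_coeff_sub_ne_zero [Zero M] [Zero N]
    (a : HahnSeries ℤ M) (f : HahnSeries ℤ N) (n : ℤ) :
    {k | a.coeff k ≠ 0 ∧ f.coeff (n - k) ≠ 0}.Finite :=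
  (Set.finite_Icc a.order (n - f.order)).subset fun k ⟨ha, hf⟩ =>
    ⟨order_le_of_coeff_ne_zero ha, by linarith [order_le_of_coeff_ne_zero hf]⟩

theorem finite_setOf_coeff_ne_zero₃ [Zero M] [Zero N] [Zero P]
    (f : HahnSeries ℤ M) (a : HahnSeries ℤ N) (g : HahnSeries ℤ P) (n : ℤ) :
    {p : ℤ × ℤ | f.coeff p.1 ≠ 0 ∧ a.coeff p.2 ≠ 0 ∧ g.coeff (n - p.1 - p.2) ≠ 0}.Finite :=
  ((Set.finite_Icc f.order (n - a.order - g.order)).prod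
    (Set.finite_Icc a.order (n - f.order - g.order))).subset fun p ⟨hf, ha, hg⟩ => by
    have := order_le_of_coeff_ne_zero hf
    have := order_le_of_coeff_ne_zero ha
    have := order_le_of_coeff_ne_zero hg
    exact ⟨⟨by omega, by omega⟩, by omega, by omega⟩

theorem hasFiniteSupport_coeff_apply_coeff_sub {R : Type*} [Semiring R] [AddCommMonoid M]
    [AddCommMonoid N] [Module R M] [Module R N] (a : HahnSeries ℤ (M →ₗ[R] N))
    (f : HahnSeries ℤ M) (n : ℤ) : HasFiniteSupport fun k => a.coeff k (f.coeff (n - k)) := by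
  refine (finite_setOf_coeff_ne_zero_and_coeff_sub_ne_zero a f n).subset fun k hk => ?_
  refine ⟨fun ha => hk ?_, fun hf => hk ?_⟩ <;> simp [*]

theorem finsum_coeff_single_apply_coeff_sub {R : Type*} [Semiring R] [AddCommMonoid M]
    [AddCommMonoid N] [Module R M] [Module R N] (m : ℤ) (φ : M →ₗ[R] N)
    (f : HahnSeries ℤ M) (n : ℤ) :
    ∑ᶠ k : ℤ, (single m φ).coeff k (f.coeff (n - k)) = φ (f.coeff (n - m)) := by
  rw [finsum_eq_single _ m fun k hk => by simp [coeff_single_of_ne hk], coeff_single_same]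

end HahnSeries

section

variable {K H : Type*} [Field K] [AddCommGroup H] [Module K H] (B : LinearMap.BilinForm K H)
  (a : HahnSeries ℤ (Module.End K H)) (f g F G : HahnSeries ℤ H)

theorem giventalForm_eq_finsum_of_coeff_left
    (hF : ∀ n : ℤ, F.coeff n = ∑ᶠ k : ℤ, a.coeff k (f.coeff (n - k))) :
    giventalForm B F g =
      ∑ᶠ (j : ℤ) (k : ℤ), (-1 : K) ^ (j + k) * B (a.coeff k (f.coeff j)) (g.coeff (-1 - j - k)) := by
  let u : ℤ × ℤ → K := fun p =>
    (-1 : K) ^ (p.1 + p.2) * B (a.coeff p.2 (f.coeff p.1)) (g.coeff (-1 - p.1 - p.2))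
  have hu : HasFiniteSupport u := by
    refine (HahnSeries.finite_setOf_coeff_ne_zero₃ f a g (-1)).subset fun p hp => ?_
    refine ⟨fun hf => hp ?_, fun ha => hp ?_, fun hg => hp ?_⟩ <;> simp [u, *]
  rw [← finsum_finsum_comp_sub_eq u hu]
  refine finsum_congr fun i => ?_
  rw [hF, ← LinearMap.flip_apply B, map_finsum _ (a.hasFiniteSupport_coeff_apply_coeff_sub f i),
    mul_finsum]
  simp only [u, sub_add_cancel, sub_sub, LinearMap.flip_apply]

theorem giventalForm_eq_finsum_of_coeff_right
    (hG : ∀ n : ℤ, G.coeff n = ∑ᶠ k : ℤ, a.coeff k (g.coeff (n - k))) :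
    giventalForm B f G =
      ∑ᶠ (j : ℤ) (k : ℤ), (-1 : K) ^ j * B (f.coeff j) (a.coeff k (g.coeff (-1 - j - k))) := by
  simp only [giventalForm, hG]
  refine finsum_congr fun j => ?_
  rw [map_finsum _ (a.hasFiniteSupport_coeff_apply_coeff_sub g _), mul_finsum]

theorem neg_one_zpow_add_mul_neg_one_zpow_add_one (j k : ℤ) :
    (-1 : K) ^ (j + k) * (-1) ^ (k + 1) = -(-1) ^ j := by
  rw [zpow_add₀ (by norm_num), zpow_add_one₀ (by norm_num)]
  have : (-1 : K) ^ k * (-1) ^ k = 1 := by rw [← mul_zpow]; norm_num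
  linear_combination (-(-1 : K) ^ j) * this

theorem giventalForm_add_giventalForm_eq_zero_of_coeff
    (hskew : ∀ (k : ℤ) (x y : H), B (a.coeff k x) y = (-1) ^ (k + 1) * B x (a.coeff k y))
    (hF : ∀ n : ℤ, F.coeff n = ∑ᶠ k : ℤ, a.coeff k (f.coeff (n - k)))
    (hG : ∀ n : ℤ, G.coeff n = ∑ᶠ k : ℤ, a.coeff k (g.coeff (n - k))) :
    giventalForm B F g + giventalForm B f G = 0 := by
  rw [giventalForm_eq_finsum_of_coeff_left B a f g F hF,
    giventalForm_eq_finsum_of_coeff_right B a f g G hG, add_eq_zero_iff_eq_neg,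
    ← finsum_neg_distrib]
  refine finsum_congr fun j => ?_
  rw [← finsum_neg_distrib]
  refine finsum_congr fun k => ?_
  rw [hskew, ← mul_assoc, neg_one_zpow_add_mul_neg_one_zpow_add_one, neg_mul]

end

theorem twisted_loop_algebra_antisymmetric_general
    {K H : Type*} [Field K] [AddCommGroup H] [Module K H]
    (B : LinearMap.BilinForm K H) :
    (∀ (a : HahnSeries ℤ (Module.End K H)) (astar : ℤ → Module.End K H),
      (∀ (n : ℤ) (x y : H), B (a.coeff n x) y = B x (astar n y)) →
      (∀ n : ℤ, astar n = ((-1 : K) ^ (n + 1)) • a.coeff n) →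
      ∀ f g F G : HahnSeries ℤ H,
        (∀ n : ℤ, F.coeff n = ∑ᶠ k : ℤ, a.coeff k (f.coeff (n - k))) →
        (∀ n : ℤ, G.coeff n = ∑ᶠ k : ℤ, a.coeff k (g.coeff (n - k))) →
        giventalForm B F g + giventalForm B f G = 0) ∧
    (∀ f g F G : HahnSeries ℤ H,
      (∀ n : ℤ, F.coeff n = f.coeff (n + 1)) →
      (∀ n : ℤ, G.coeff n = g.coeff (n + 1)) →
      giventalForm B F g + giventalForm B f G = 0) := by
  refine ⟨fun a astar hadj hstar f g F G hF hG => ?_, fun f g F G hF hG => ?_⟩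
  · refine giventalForm_add_giventalForm_eq_zero_of_coeff B a f g F G (fun k x y => ?_) hF hG
    rw [hadj, hstar, LinearMap.smul_apply, map_smul, smul_eq_mul]
  · let zInv : HahnSeries ℤ (Module.End K H) := HahnSeries.single (-1) 1
    have hskew (k : ℤ) (x y : H) :
        B (zInv.coeff k x) y = (-1) ^ (k + 1) * B x (zInv.coeff k y) := by
      by_cases hk : k = -1
      · simp [zInv, hk]
      · simp [zInv, HahnSeries.coeff_single_of_ne hk]
    have hshift (h : HahnSeries ℤ H) (n : ℤ) :
        h.coeff (n + 1) = ∑ᶠ k : ℤ, zInv.coeff k (h.coeff (n - k)) := by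
      rw [HahnSeries.finsum_coeff_single_apply_coeff_sub, sub_neg_eq_add, Module.End.one_apply]
    exact giventalForm_add_giventalForm_eq_zero_of_coeff B zInv f g F G hskew
      (fun n => (hF n).trans (hshift f n)) (fun n => (hG n).trans (hshift g n))

/-- If `a(z) = ∑ a_n zⁿ` is an `End(H)`-valued Laurent series with
support bounded below such that each `a_n` has a `B`-adjoint `a_n^*` with
`a_n^* = (−1)^{n+1} a_n` (i.e. `a^*(−z) + a(z) = 0`, membership in the twisted
loop Lie algebra), then the multiplication operator `f ↦ a·f`, given
coefficientwise by `(a·f)_n = ∑_{k+l=n} a_k(f_l)`, is `Ω`-anti-symmetric.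
In particular multiplication by `z⁻¹` (the case `a = z⁻¹·id`, whose product
shifts coefficients by `(a·f)_n = f_{n+1}`) is `Ω`-anti-symmetric. -/
theorem twisted_loop_algebra_antisymmetric
    {K H : Type*} [Field K] [CharZero K] [AddCommGroup H] [Module K H]
    [FiniteDimensional K H]
    (B : LinearMap.BilinForm K H) (hBsymm : ∀ x y : H, B x y = B y x) :
    (∀ (a : HahnSeries ℤ (Module.End K H)) (astar : ℤ → Module.End K H),
      (∀ (n : ℤ) (x y : H), B (a.coeff n x) y = B x (astar n y)) →
      (∀ n : ℤ, astar n = ((-1 : K) ^ (n + 1)) • a.coeff n) →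
      ∀ f g F G : HahnSeries ℤ H,
        (∀ n : ℤ, F.coeff n = ∑ᶠ k : ℤ, a.coeff k (f.coeff (n - k))) →
        (∀ n : ℤ, G.coeff n = ∑ᶠ k : ℤ, a.coeff k (g.coeff (n - k))) →
        giventalForm B F g + giventalForm B f G = 0) ∧
    (∀ f g F G : HahnSeries ℤ H,
      (∀ n : ℤ, F.coeff n = f.coeff (n + 1)) →
      (∀ n : ℤ, G.coeff n = g.coeff (n + 1)) →
      giventalForm B F g + giventalForm B f G = 0) :=
  twisted_loop_algebra_antisymmetric_general B
end

section
/- Let n ≥ 1 and let g be an invertible symmetric n×n real matrix. Let A : ℝ → Matrix(n,n,ℝ) be a family of matrices with A(τ)ᵀ g = g A(τ) for all τ (each A(τ) is self-adjoint with respect to the bilinear form defined by g). Let S_k : ℝ → Matrix(n,n,ℝ), k = 0, 1, 2, …, be differentiable functions with S₀ ≡ 1 (the identity matrix) and S_k′(τ) = A(τ)·S_{k−1}(τ) for all k ≥ 1 and all τ (the coefficientwise form of the calibration equation z ∂_τ S = A S for S(z,τ) = 1 + S₁(τ)z⁻¹ + S₂(τ)z⁻² + ⋯). Then, for every k ≥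 1, the function τ ↦ ∑_{i=0}^{k} (−1)^i S_i(τ)ᵀ g S_{k−i}(τ) is constant on ℝ. In particular, if S_k(0) = 0 for all k ≥ 1, then ∑_{i=0}^{k} (−1)^i S_i(τ)ᵀ g S_{k−i}(τ) = 0 for all τ and all k ≥ 1; that is, S satisfies the twisted loop group condition S^*(−z) S(z) = 1. -/
/-!
Differentiating `τ ↦ ∑ (-1)^i S_iᵀ g S_{k-i}` with `S_i' = A S_{i-1}` produces two sums of
terms `± S_iᵀ Aᵀ g S_j` and `± S_iᵀ g A S_j` with `i + j = k - 1`. Self-adjointness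
`Aᵀ g = g A` identifies them, and they carry opposite signs, so the derivative vanishes and
the sum is constant. If moreover `S_k(0) = 0` for `k ≥ 1`, then at `τ = 0` every term has a
vanishing factor, because `i ≥ 1` or `k - i ≥ 1`.
-/

open Finset Matrix

namespace Matrix

variable {m l o α : Type*}

def HasEntrywiseDerivAt (M : ℝ → Matrix m o ℝ) (M' : Matrix m o ℝ) (τ : ℝ) : Prop :=
  ∀ i j, HasDerivAt (fun t => M t i j) (M' i j) τ

namespace HasEntrywiseDerivAt

variable {M : ℝ → Matrix m l ℝ} {N : ℝ → Matrix l o ℝ} {M' : Matrix m l ℝ}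
  {N' : Matrix l o ℝ} {τ : ℝ}

theorem const (C : Matrix m o ℝ) (τ : ℝ) : HasEntrywiseDerivAt (fun _ => C) 0 τ :=
  fun _ _ => hasDerivAt_const _ _

theorem transpose (h : HasEntrywiseDerivAt M M' τ) :
    HasEntrywiseDerivAt (fun t => (M t)ᵀ) M'ᵀ τ :=
  fun i j => h j i

theorem mul [Fintype l] (hM : HasEntrywiseDerivAt M M' τ) (hN : HasEntrywiseDerivAt N N' τ) :
    HasEntrywiseDerivAt (fun t => M t * N t) (M' * N τ + M τ * N') τ := by
  intro i j
  simp only [mul_apply, add_apply, ← sum_add_distrib]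
  exact HasDerivAt.fun_sum fun k _ => (hM i k).mul (hN k j)

theorem const_smul (c : ℝ) (h : HasEntrywiseDerivAt M M' τ) :
    HasEntrywiseDerivAt (fun t => c • M t) (c • M') τ :=
  fun i j => (h i j).const_mul c

theorem sum {s : Finset α} {M : α → ℝ → Matrix m o ℝ} {M' : α → Matrix m o ℝ}
    (h : ∀ a ∈ s, HasEntrywiseDerivAt (M a) (M' a) τ) :
    HasEntrywiseDerivAt (fun t => ∑ a ∈ s, M a t) (∑ a ∈ s, M' a) τ := by
  intro i j
  simp only [Matrix.sum_apply]
  exact HasDerivAt.fun_sum fun a ha => h a ha i j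

end HasEntrywiseDerivAt

theorem eq_of_hasEntrywiseDerivAt_zero {M : ℝ → Matrix m o ℝ}
    (h : ∀ τ, HasEntrywiseDerivAt M 0 τ) (τ₁ τ₂ : ℝ) : M τ₁ = M τ₂ := by
  ext i j
  exact is_const_of_deriv_eq_zero (fun t => (h t i j).differentiableAt)
    (fun t => (h t i j).deriv) τ₁ τ₂

end Matrix

section TwistedPairing

variable {R ι : Type*} [CommRing R] [Fintype ι]

/-- The coefficient of `z⁻ᵏ` in `P(-z)ᵀ g Q(z)`, where `P(z) = ∑ Pᵢ z⁻ⁱ` and `Q(z) = ∑ Qᵢ z⁻ⁱ`. -/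
def twistedPairing (g : Matrix ι ι R) (P Q : ℕ → Matrix ι ι R) (k : ℕ) : Matrix ι ι R :=
  ∑ i ∈ range (k + 1), (-1 : R) ^ i • ((P i)ᵀ * g * Q (k - i))

theorem twistedPairing_eq_zero {g : Matrix ι ι R} {P Q : ℕ → Matrix ι ι R} {k : ℕ}
    (hk : 1 ≤ k) (hP : ∀ i, 1 ≤ i → P i = 0) (hQ : ∀ i, 1 ≤ i → Q i = 0) :
    twistedPairing g P Q k = 0 := by
  refine sum_eq_zero fun i _ => ?_
  rcases Nat.eq_zero_or_pos i with rfl | hi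
  · rw [Nat.sub_zero, hQ k hk, mul_zero, smul_zero]
  · rw [hP i hi, transpose_zero, zero_mul, zero_mul, smul_zero]

theorem twistedPairing_add_twistedPairing_eq_zero {g A : Matrix ι ι R} {S D : ℕ → Matrix ι ι R}
    (hA : Aᵀ * g = g * A) (hD₀ : D 0 = 0) (hD : ∀ i, D (i + 1) = A * S i) (k : ℕ) :
    twistedPairing g D S k + twistedPairing g S D k = 0 := by
  set T := ∑ i ∈ range k, (-1 : R) ^ i • ((S i)ᵀ * (g * A) * S (k - (i + 1)))
  have hDS : twistedPairing g D S k = -T := by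
    rw [twistedPairing, sum_range_succ', hD₀, transpose_zero, zero_mul, zero_mul, smul_zero,
      add_zero, ← sum_neg_distrib]
    refine sum_congr rfl fun i _ => ?_
    rw [hD, transpose_mul, mul_assoc (S i)ᵀ, hA, pow_succ, mul_neg_one, neg_smul,
      ← mul_assoc]
  have hSD : twistedPairing g S D k = T := by
    rw [twistedPairing, sum_range_succ, Nat.sub_self, hD₀, mul_zero, smul_zero, add_zero]
    refine sum_congr rfl fun i hi => ?_
    obtain ⟨j, hj⟩ := Nat.exists_eq_add_of_lt (mem_range.mp hi)
    rw [hj, show i + j + 1 - i = j + 1 by omega, show i + j + 1 - (i + 1) = j by omega, hD]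
    simp only [Matrix.mul_assoc]
  rw [hDS, hSD, neg_add_cancel]

end TwistedPairing

theorem hasEntrywiseDerivAt_twistedPairing {ι : Type*} [Fintype ι] (g : Matrix ι ι ℝ)
    {S : ℕ → ℝ → Matrix ι ι ℝ} {D : ℕ → Matrix ι ι ℝ} {τ : ℝ}
    (hS : ∀ i, HasEntrywiseDerivAt (S i) (D i) τ) (k : ℕ) :
    HasEntrywiseDerivAt (fun t => twistedPairing g (S · t) (S · t) k)
      (twistedPairing g D (S · τ) k + twistedPairing g (S · τ) D k) τ := by
  have hterm : ∀ i, HasEntrywiseDerivAt (fun t => (S i t)ᵀ * g * S (k - i) t)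
      ((D i)ᵀ * g * S (k - i) τ + (S i τ)ᵀ * g * D (k - i)) τ := fun i => by
    simpa only [mul_zero, add_zero] using
      ((hS i).transpose.mul (HasEntrywiseDerivAt.const g τ)).mul (hS (k - i))
  simpa only [twistedPairing, ← sum_add_distrib, ← smul_add] using
    HasEntrywiseDerivAt.sum fun i _ => (hterm i).const_smul ((-1 : ℝ) ^ i)

theorem calibration_unitarity_general
    {n : ℕ} (g : Matrix (Fin n) (Fin n) ℝ)
    (A : ℝ → Matrix (Fin n) (Fin n) ℝ)
    (hA : ∀ τ : ℝ, (A τ)ᵀ * g = g * A τ)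
    (S : ℕ → ℝ → Matrix (Fin n) (Fin n) ℝ)
    (hS0 : ∀ τ : ℝ, S 0 τ = 1)
    (hS : ∀ k : ℕ, 1 ≤ k → ∀ τ : ℝ, ∀ i j : Fin n,
      HasDerivAt (fun t => S k t i j) ((A τ * S (k - 1) τ) i j) τ) :
    (∀ k : ℕ, 1 ≤ k → ∀ τ₁ τ₂ : ℝ,
        ∑ i ∈ Finset.range (k + 1), (-1 : ℝ) ^ i • ((S i τ₁)ᵀ * g * S (k - i) τ₁)
          = ∑ i ∈ Finset.range (k + 1), (-1 : ℝ) ^ i • ((S i τ₂)ᵀ * g * S (k - i) τ₂)) ∧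
    ((∀ k : ℕ, 1 ≤ k → S k 0 = 0) →
      ∀ k : ℕ, 1 ≤ k → ∀ τ : ℝ,
        ∑ i ∈ Finset.range (k + 1), (-1 : ℝ) ^ i • ((S i τ)ᵀ * g * S (k - i) τ) = 0) := by
  let D (τ : ℝ) (i : ℕ) : Matrix (Fin n) (Fin n) ℝ := if i = 0 then 0 else A τ * S (i - 1) τ
  have hSD : ∀ τ i, HasEntrywiseDerivAt (S i) (D τ i) τ := by
    rintro τ (_ | i)
    · rw [show S 0 = fun _ => 1 from funext hS0]
      exact HasEntrywiseDerivAt.const 1 τ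
    · rw [show D τ (i + 1) = A τ * S i τ from if_neg i.succ_ne_zero]
      exact hS (i + 1) i.succ_pos τ
  have hconst : ∀ k τ₁ τ₂,
      twistedPairing g (S · τ₁) (S · τ₁) k = twistedPairing g (S · τ₂) (S · τ₂) k := by
    refine fun k => eq_of_hasEntrywiseDerivAt_zero fun τ => ?_
    have hcancel := twistedPairing_add_twistedPairing_eq_zero (S := (S · τ)) (D := D τ) (hA τ)
      (if_pos rfl) (fun i => if_neg i.succ_ne_zero) k
    simpa only [hcancel] using hasEntrywiseDerivAt_twistedPairing g (hSD τ) k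
  exact ⟨fun k _ => hconst k, fun hinit k hk τ =>
    (hconst k τ 0).trans (twistedPairing_eq_zero hk hinit hinit)⟩

/-- Propagation of the twisted-loop-group (unitarity) condition
along the calibration equation. If `g` is an invertible symmetric matrix,
`A(τ)` is `g`-self-adjoint, `S₀ ≡ 1` and `S_k' = A·S_{k−1}` (entrywise
derivatives), then `τ ↦ ∑_{i=0}^k (−1)^i S_i(τ)ᵀ g S_{k−i}(τ)` is constant for
every `k ≥ 1`; in particular if `S_k(0) = 0` for `k ≥ 1` then these sums vanish
identically, i.e. `S*(−z)S(z) = 1`. -/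
theorem calibration_unitarity
    {n : ℕ} (hn : 1 ≤ n) (g : Matrix (Fin n) (Fin n) ℝ)
    (hg : IsUnit g) (hgsymm : gᵀ = g)
    (A : ℝ → Matrix (Fin n) (Fin n) ℝ)
    (hA : ∀ τ : ℝ, (A τ)ᵀ * g = g * A τ)
    (S : ℕ → ℝ → Matrix (Fin n) (Fin n) ℝ)
    (hS0 : ∀ τ : ℝ, S 0 τ = 1)
    (hS : ∀ k : ℕ, 1 ≤ k → ∀ τ : ℝ, ∀ i j : Fin n,
      HasDerivAt (fun t => S k t i j) ((A τ * S (k - 1) τ) i j) τ) :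
    (∀ k : ℕ, 1 ≤ k → ∀ τ₁ τ₂ : ℝ,
        ∑ i ∈ Finset.range (k + 1), (-1 : ℝ) ^ i • ((S i τ₁)ᵀ * g * S (k - i) τ₁)
          = ∑ i ∈ Finset.range (k + 1), (-1 : ℝ) ^ i • ((S i τ₂)ᵀ * g * S (k - i) τ₂)) ∧
    ((∀ k : ℕ, 1 ≤ k → S k 0 = 0) →
      ∀ k : ℕ, 1 ≤ k → ∀ τ : ℝ,
        ∑ i ∈ Finset.range (k + 1), (-1 : ℝ) ^ i • ((S i τ)ᵀ * g * S (k - i) τ) = 0) :=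
  calibration_unitarity_general g A hA S hS0 hS
end

section
/- Let u : ℝ → ℝ be continuously differentiable with u(0) = 0 and u′(0) = 1. Suppose there exists a function f : ℝ → ℝ such that u(−x−y)·f(y) = u(−x) − u(y) for all x, y ∈ ℝ. Then there exists λ ∈ ℝ such that u′(z) = exp(−λ z) for all z ∈ ℝ; consequently u(z) = (1 − exp(−λ z))/λ for all z if λ ≠ 0, and u(z) = z for all z if λ = 0. -/
/-!
Differentiating the identity `u (-x - y) * f y = u (-x) - u y` in `x` and putting `x = 0`
gives `f y = 1 / u' (-y)`, which turns the differentiated identity into the multiplicative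
Cauchy equation `u' (x + y) = u' x * u' y`. So `u' t = u' (t / 2) ^ 2 > 0`, and `log ∘ u'` is a
continuous additive map, hence linear: `u' z = exp (-(l * z))`.
Integrating with `u 0 = 0` gives `u`.
-/

open Real

theorem exists_eq_exp_mul_of_map_add_eq_mul {g : ℝ → ℝ} (hg : Continuous g)
    (hmul : ∀ x y, g (x + y) = g x * g y) (hne : ∀ x, g x ≠ 0) :
    ∃ c, ∀ t, g t = exp (c * t) := by
  have hpos (t : ℝ) : 0 < g t := by
    simpa [← hmul] using mul_self_pos.2 (hne (t / 2))
  let L : ℝ →+ ℝ := AddMonoidHom.mk' (fun t ↦ log (g t)) fun x y ↦ by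
    simp only [hmul, log_mul (hne x) (hne y)]
  refine ⟨L 1, fun t ↦ ?_⟩
  have hlin : log (g t) = t * L 1 := by
    simpa [L] using map_real_smul L (hg.log hne) t 1
  rw [mul_comm, ← hlin, exp_log (hpos t)]

theorem eq_of_forall_hasDerivAt_deriv {u v : ℝ → ℝ} (hu : Differentiable ℝ u)
    (hv : ∀ z, HasDerivAt v (deriv u z) z) (h0 : u 0 = v 0) : u = v :=
  eq_of_fderiv_eq hu (fun z ↦ (hv z).differentiableAt)
    (fun z ↦ (hu z).hasDerivAt.hasFDerivAt.fderiv.trans (hv z).hasFDerivAt.fderiv.symm) 0 h0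

theorem hasDerivAt_one_sub_exp_neg_mul_div {l : ℝ} (hl : l ≠ 0) (z : ℝ) :
    HasDerivAt (fun z ↦ (1 - exp (-(l * z))) / l) (exp (-(l * z))) z := by
  have hexp : HasDerivAt (fun z ↦ exp (-(l * z))) (exp (-(l * z)) * -l) z := by
    simpa using ((hasDerivAt_id z).const_mul l).neg.exp
  refine ((hexp.const_sub 1).div_const l).congr_deriv ?_
  field_simp

section FunctionalEquation

variable {u f : ℝ → ℝ} (hu : Differentiable ℝ u)
  (hf : ∀ x y, u (-x - y) * f y = u (-x) - u y)
include hu hf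

theorem deriv_neg_sub_mul_eq : ∀ x y, deriv u (-x - y) * f y = deriv u (-x) := by
  intro x y
  have hlhs : HasDerivAt (fun x ↦ u (-x - y) * f y) (-deriv u (-x - y) * f y) x := by
    simpa using ((hu (-x - y)).hasDerivAt.comp x ((hasDerivAt_neg x).sub_const y)).mul_const (f y)
  have hrhs : HasDerivAt (fun x ↦ u (-x - y) * f y) (-deriv u (-x)) x := by
    simpa [hf] using ((hu (-x)).hasDerivAt.comp x (hasDerivAt_neg x)).sub_const (u y)
  simpa using hlhs.unique hrhs

variable (hu1 : deriv u 0 = 1)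
include hu1

theorem deriv_mul_eq_one : ∀ y, deriv u y * f (-y) = 1 := fun y ↦ by
  simpa [hu1] using deriv_neg_sub_mul_eq hu hf 0 (-y)

theorem deriv_add_eq_mul : ∀ x y, deriv u (x + y) = deriv u x * deriv u y := fun x y ↦ by
  have h := deriv_neg_sub_mul_eq hu hf (-x) (-y)
  simp only [neg_neg, sub_neg_eq_add] at h
  linear_combination deriv u y * h - deriv u (x + y) * deriv_mul_eq_one hu hf hu1 y

end FunctionalEquation

/-- If `u` is `C¹` with `u(0) = 0`, `u'(0) = 1`, and
`u(−x−y)·f(y) = u(−x) − u(y)` for some `f` and all `x, y`, then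
`u'(z) = e^{−λz}` for some `λ`; hence `u(z) = (1 − e^{−λz})/λ` if `λ ≠ 0`
and `u(z) = z` if `λ = 0`. -/
theorem formal_group_law_is_multiplicative
    (u f : ℝ → ℝ) (hu : ContDiff ℝ 1 u) (hu0 : u 0 = 0) (hu1 : deriv u 0 = 1)
    (hf : ∀ x y : ℝ, u (-x - y) * f y = u (-x) - u y) :
    ∃ l : ℝ, (∀ z : ℝ, deriv u z = Real.exp (-(l * z))) ∧
      (l ≠ 0 → ∀ z : ℝ, u z = (1 - Real.exp (-(l * z))) / l) ∧
      (l = 0 → ∀ z : ℝ, u z = z) := by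
  have hud : Differentiable ℝ u := hu.differentiable one_ne_zero
  obtain ⟨c, hc⟩ := exists_eq_exp_mul_of_map_add_eq_mul (hu.continuous_deriv le_rfl)
    (deriv_add_eq_mul hud hf hu1) fun y ↦ left_ne_zero_of_mul_eq_one (deriv_mul_eq_one hud hf hu1 y)
  have hderiv (z : ℝ) : deriv u z = exp (-(-c * z)) := by rw [hc, neg_mul, neg_neg]
  refine ⟨-c, hderiv, fun hl z ↦ ?_, fun hl z ↦ ?_⟩
  · refine congrFun (eq_of_forall_hasDerivAt_deriv hud
      (v := fun z ↦ (1 - exp (-(-c * z))) / -c) (fun z ↦ ?_) (by simp [hu0])) z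
    exact hderiv z ▸ hasDerivAt_one_sub_exp_neg_mul_div hl z
  · refine congrFun (eq_of_forall_hasDerivAt_deriv hud (v := id) (fun z ↦ ?_) hu0) z
    simpa [hderiv, hl] using hasDerivAt_id z
end

section
/- Let K be a field of characteristic zero, N ≥ 1, and let G be a multivariate formal power series over K in the variables t^α_k indexed by pairs (α, k) with α ∈ {1,…,N} and k ∈ ℕ. Let (g_{αβ}) be an invertible symmetric N×N matrix over K with inverse (g^{μν}), and let ∂_{α,k} denote the formal partial derivative with respect to t^α_k, defined coefficientwise. Assume: (i) (topological recursion relations) for all α, β, γ ∈ {1,…,N} and all k, l, m ∈ ℕ, ∂_{α,k+1}∂_{β,l}∂_{γ,m} G = ∑_{μ,ν} (∂_{α,k}∂_{μ,0} G) · g^{μν} · (∂_{ν,0}∂_{β,l}∂_{γ,m} G) as an identity of formal power series; (ii) the 2-jet of G at the origin vanishes: the constant term of G, the constant term of every first partial derivative ∂_{α,k} G, and the constant term of every second partial derivative ∂_{α,k}∂_{β,l} G are all zero. Then G is tame: for every r ∈ ℕ, all indices α₁,…,α_r ∈ {1,…,N} and all k₁,…,k_r ∈ ℕ with k₁ + ⋯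 + k_r > r − 3, the constant term of ∂_{α₁,k₁}⋯∂_{α_r,k_r} G is zero (equivalently, the coefficient of G at the monomial t^{α₁}_{k₁}⋯t^{α_r}_{k_r} vanishes). -/
/-- Formal partial derivative of a multivariate formal power series with respect
to the variable `v`, defined coefficientwise: the coefficient of `∂_v F` at a
monomial `d` is `(d(v) + 1)` times the coefficient of `F` at `d + v`. -/
noncomputable def fpderiv {K : Type*} [CommRing K] {σ : Type*} [DecidableEq σ]
    (v : σ) (F : MvPowerSeries σ K) : MvPowerSeries σ K :=
  fun d => ((d v : K) + 1) * MvPowerSeries.coeff (d + Finsupp.single v 1) F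

/-- Iterated formal partial derivative `∂_{v₁} ⋯ ∂_{v_r} F` along a list of
variables. -/
noncomputable def fpderivIter {K : Type*} [CommRing K] {σ : Type*} [DecidableEq σ] :
    List σ → MvPowerSeries σ K → MvPowerSeries σ K
  | [], F => F
  | v :: l, F => fpderiv v (fpderivIter l F)

open MvPowerSeries Finsupp

section aux
variable {K : Type*} [Field K] [CharZero K] {σ : Type*} [DecidableEq σ]

omit [CharZero K] in
lemma coeff_fpderiv (v : σ) (F : MvPowerSeries σ K) (d : σ →₀ ℕ) :
    coeff d (fpderiv v F) = ((d v : K) + 1) * coeff (d + Finsupp.single v 1) F := rfl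

noncomputable def monom (l : List σ) : σ →₀ ℕ := (l.map fun v => Finsupp.single v 1).sum

lemma coeff_fpderivIter (l : List σ) (d : σ →₀ ℕ) :
    ∃ c : K, c ≠ 0 ∧ ∀ F : MvPowerSeries σ K,
      coeff d (fpderivIter l F) = c * coeff (d + monom l) F := by
  induction l generalizing d with
  | nil => exact ⟨1, one_ne_zero, fun F => by simp [fpderivIter, monom]⟩
  | cons v l ih =>
    obtain ⟨c, hc, hcoeff⟩ := ih (d + Finsupp.single v 1)
    refine ⟨((d v : K) + 1) * c, mul_ne_zero ?_ hc, fun F => ?_⟩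
    · have : ((d v : K) + 1) = ((d v + 1 : ℕ) : K) := by push_cast; ring
      rw [this]
      exact Nat.cast_ne_zero.mpr (Nat.succ_ne_zero _)
    · show coeff d (fpderiv v (fpderivIter l F)) = _
      rw [coeff_fpderiv, hcoeff, mul_assoc]
      have hm : (d + Finsupp.single v 1) + monom l = d + monom (v :: l) := by
        simp only [monom, List.map_cons, List.sum_cons]
        abel
      rw [hm]

lemma coeff_monom_eq_zero (G : MvPowerSeries σ K) (l : List σ)
    (h : coeff 0 (fpderivIter l G) = 0) : coeff (monom l) G = 0 := by
  obtain ⟨c, hc, hf⟩ := coeff_fpderivIter (K := K) l 0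
  have h2 := hf G
  rw [h, zero_add] at h2
  exact (mul_eq_zero.mp h2.symm).resolve_left hc

lemma coeff_eq_of_coeff0_fpderivIter (G : MvPowerSeries σ K) (l : List σ)
    (h : coeff (monom l) G = 0) : coeff 0 (fpderivIter l G) = 0 := by
  obtain ⟨c, hc, hf⟩ := coeff_fpderivIter (K := K) l 0
  rw [hf G, zero_add, h, mul_zero]

end aux

section sw
variable {N : ℕ}

noncomputable def dsize {σ : Type*} : (σ →₀ ℕ) →+ ℕ :=
  Finsupp.liftAddHom (fun _ => AddMonoidHom.id ℕ)

noncomputable def dwt : ((Fin N × ℕ) →₀ ℕ) →+ ℕ :=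
  Finsupp.liftAddHom (fun v => AddMonoidHom.mulRight v.2)

lemma dsize_single {σ : Type*} (v : σ) (n : ℕ) : dsize (Finsupp.single v n) = n := by
  simp [dsize]

lemma dwt_single (v : Fin N × ℕ) (n : ℕ) : dwt (Finsupp.single v n) = n * v.2 := by
  simp [dwt]

lemma dsize_eq_zero {σ : Type*} {D : σ →₀ ℕ} (h : dsize D = 0) : D = 0 := by
  ext v
  by_contra hv
  have hmem : v ∈ D.support := Finsupp.mem_support_iff.mpr hv
  have : dsize D = ∑ u ∈ D.support, D u := by
    simp [dsize, Finsupp.sum]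
  rw [this] at h
  exact hv (Finset.sum_eq_zero_iff.mp h v hmem)

lemma decomp {σ : Type*} {D : σ →₀ ℕ} {v : σ} (h : D v ≠ 0) :
    ∃ D' : σ →₀ ℕ, D = D' + Finsupp.single v 1 := by
  refine ⟨D - Finsupp.single v 1, ?_⟩
  rw [tsub_add_cancel_of_le]
  exact Finsupp.single_le_iff.mpr (Nat.one_le_iff_ne_zero.mpr h)

lemma exists_pos {σ : Type*} {D : σ →₀ ℕ} (h : dsize D ≠ 0) : ∃ v, D v ≠ 0 := by
  by_contra hc
  push_neg at hc
  have : D = 0 := by ext v; exact hc v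
  rw [this] at h
  exact h (map_zero _)

lemma exists_wt_pos {D : (Fin N × ℕ) →₀ ℕ} (h : dwt D ≠ 0) :
    ∃ v, D v ≠ 0 ∧ v.2 ≠ 0 := by
  have hsum : dwt D = ∑ v ∈ D.support, D v * v.2 := by
    simp [dwt, Finsupp.sum]
  rw [hsum] at h
  obtain ⟨v, _, hv⟩ := Finset.exists_ne_zero_of_sum_ne_zero h
  exact ⟨v, fun h0 => hv (by rw [h0, zero_mul]), fun h0 => hv (by rw [h0, mul_zero])⟩

end sw

section key

variable {K : Type*} [Field K] [CharZero K] {N : ℕ}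

lemma key (ginv : Matrix (Fin N) (Fin N) K)
    (G : MvPowerSeries (Fin N × ℕ) K)
    (hTRR : ∀ (α β γ : Fin N) (k l m : ℕ),
      fpderiv (α, k + 1) (fpderiv (β, l) (fpderiv (γ, m) G))
        = ∑ μ : Fin N, ∑ ν : Fin N,
            ginv μ ν •
              (fpderiv (α, k) (fpderiv (μ, 0) G)
                * fpderiv (ν, 0) (fpderiv (β, l) (fpderiv (γ, m) G))))
    (h0 : MvPowerSeries.coeff 0 G = 0)
    (h1 : ∀ v : Fin N × ℕ, MvPowerSeries.coeff 0 (fpderiv v G) = 0)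
    (h2 : ∀ v w : Fin N × ℕ, MvPowerSeries.coeff 0 (fpderiv v (fpderiv w G)) = 0) :
    ∀ (W : ℕ) (D : (Fin N × ℕ) →₀ ℕ), dwt D < W → dsize D < dwt D + 3 →
      coeff D G = 0 := by
  intro W
  induction W with
  | zero => intro D h; omega
  | succ W IH =>
    intro D hW hsz
    by_cases h3 : dsize D ≤ 2
    · -- small cases, use the 2-jet
      interval_cases h : dsize D
      · rw [dsize_eq_zero h]
        exact h0
      · obtain ⟨v, hv⟩ := exists_pos (h ▸ one_ne_zero)
        obtain ⟨D1, hD1⟩ := decomp hv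
        have hs1 : dsize D1 = 0 := by
          have := map_add dsize D1 (Finsupp.single v 1)
          rw [← hD1, h, dsize_single] at this
          omega
        rw [hD1, dsize_eq_zero hs1, zero_add]
        have : Finsupp.single v 1 = monom [v] := by simp [monom]
        rw [this]
        exact coeff_monom_eq_zero G [v] (h1 v)
      · obtain ⟨v, hv⟩ := exists_pos (h ▸ (by norm_num : (2:ℕ) ≠ 0))
        obtain ⟨D1, hD1⟩ := decomp hv
        have hs1 : dsize D1 = 1 := by
          have := map_add dsize D1 (Finsupp.single v 1)
          rw [← hD1, h, dsize_single] at this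
          omega
        obtain ⟨w, hw⟩ := exists_pos (hs1 ▸ one_ne_zero)
        obtain ⟨D2, hD2⟩ := decomp hw
        have hs2 : dsize D2 = 0 := by
          have := map_add dsize D2 (Finsupp.single w 1)
          rw [← hD2, hs1, dsize_single] at this
          omega
        rw [hD1, hD2, dsize_eq_zero hs2, zero_add]
        have : Finsupp.single w 1 + Finsupp.single v 1 = monom [v, w] := by
          simp [monom]; abel
        rw [this]
        exact coeff_monom_eq_zero G [v, w] (h2 v w)
    · -- main case via TRR
      push_neg at h3
      have hwpos : dwt D ≠ 0 := by omega
      obtain ⟨v, hv, hv2⟩ := exists_wt_pos hwpos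
      obtain ⟨D1, hD1⟩ := decomp hv
      have hs1 : dsize D1 + 1 = dsize D := by
        have := map_add dsize D1 (Finsupp.single v 1)
        rw [← hD1, dsize_single] at this; omega
      obtain ⟨w, hw⟩ := exists_pos (by omega : dsize D1 ≠ 0)
      obtain ⟨D2, hD2⟩ := decomp hw
      have hs2 : dsize D2 + 1 = dsize D1 := by
        have := map_add dsize D2 (Finsupp.single w 1)
        rw [← hD2, dsize_single] at this; omega
      obtain ⟨u, hu⟩ := exists_pos (by omega : dsize D2 ≠ 0)
      obtain ⟨d, hd⟩ := decomp hu
      have hs3 : dsize d + 1 = dsize D2 := by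
        have := map_add dsize d (Finsupp.single u 1)
        rw [← hd, dsize_single] at this; omega
      -- weights
      have hwD : dwt D = dwt d + u.2 + w.2 + v.2 := by
        have e1 := map_add dwt D1 (Finsupp.single v 1)
        have e2 := map_add dwt D2 (Finsupp.single w 1)
        have e3 := map_add dwt d (Finsupp.single u 1)
        rw [← hD1, dwt_single, one_mul] at e1
        rw [← hD2, dwt_single, one_mul] at e2
        rw [← hd, dwt_single, one_mul] at e3
        omega
      -- set up TRR instance
      have hvP : ((v.1, v.2 - 1 + 1) : Fin N × ℕ) = v := by
        rw [Nat.sub_add_cancel (Nat.one_le_iff_ne_zero.mpr hv2)]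
      have hT := hTRR v.1 w.1 u.1 (v.2 - 1) w.2 u.2
      rw [hvP] at hT
      have hwP : ((w.1, w.2) : Fin N × ℕ) = w := rfl
      have huP : ((u.1, u.2) : Fin N × ℕ) = u := rfl
      rw [hwP, huP] at hT
      have hLHS : fpderiv v (fpderiv w (fpderiv u G)) = fpderivIter [v, w, u] G := rfl
      rw [hLHS] at hT
      -- take coefficient at d
      obtain ⟨c, hc, hf⟩ := coeff_fpderivIter (K := K) [v, w, u] d
      have hmon : d + monom [v, w, u] = D := by
        rw [hD1, hD2, hd]
        simp only [monom, List.map_cons, List.map_nil, List.sum_cons, List.sum_nil]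
        abel
      have hmain : coeff d (fpderivIter [v, w, u] G) = c * coeff D G := by
        rw [hf G, hmon]
      -- RHS vanishes termwise
      have hRHS : coeff d (∑ μ : Fin N, ∑ ν : Fin N,
          ginv μ ν • (fpderiv (v.1, v.2 - 1) (fpderiv (μ, 0) G)
            * fpderiv (ν, 0) (fpderiv w (fpderiv u G)))) = 0 := by
        rw [map_sum]
        apply Finset.sum_eq_zero
        intro μ _
        rw [map_sum]
        apply Finset.sum_eq_zero
        intro ν _
        rw [LinearMap.map_smul, smul_eq_zero]
        right
        rw [coeff_mul]
        apply Finset.sum_eq_zero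
        intro p hp
        have hpd : p.1 + p.2 = d := Finset.HasAntidiagonal.mem_antidiagonal.mp hp
        -- component series as iterated derivatives
        have hA : fpderiv (v.1, v.2 - 1) (fpderiv (μ, 0) G)
            = fpderivIter [(v.1, v.2 - 1), (μ, 0)] G := rfl
        have hB : fpderiv (ν, 0) (fpderiv w (fpderiv u G))
            = fpderivIter [((ν : Fin N), (0:ℕ)), w, u] G := rfl
        obtain ⟨ca, hca, hfa⟩ := coeff_fpderivIter (K := K) [(v.1, v.2 - 1), ((μ : Fin N), (0:ℕ))] p.1
        obtain ⟨cb, hcb, hfb⟩ := coeff_fpderivIter (K := K) [((ν : Fin N), (0:ℕ)), w, u] p.2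
        rw [hA, hB, hfa G, hfb G]
        set mA := p.1 + monom [(v.1, v.2 - 1), ((μ : Fin N), (0:ℕ))] with hmA
        set mB := p.2 + monom [((ν : Fin N), (0:ℕ)), w, u] with hmB
        -- sizes and weights of mA, mB
        have esA : dsize mA = dsize p.1 + 2 := by
          rw [hmA, map_add]
          simp [monom, dsize_single]
        have esB : dsize mB = dsize p.2 + 3 := by
          rw [hmB, map_add]
          simp [monom, dsize_single]
        have ewA : dwt mA = dwt p.1 + (v.2 - 1) := by
          rw [hmA, map_add]
          simp [monom, dwt_single]
        have ewB : dwt mB = dwt p.2 + w.2 + u.2 := by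
          rw [hmB, map_add]
          simp [monom, dwt_single]
          ring
        have esplit : dsize p.1 + dsize p.2 = dsize d := by
          rw [← hpd, map_add]
        have ewsplit : dwt p.1 + dwt p.2 = dwt d := by
          rw [← hpd, map_add]
        by_cases hAc : dsize mA < dwt mA + 3
        · have : coeff mA G = 0 := IH mA (by omega) hAc
          rw [this, mul_zero, zero_mul]
        · have hBc : dsize mB < dwt mB + 3 := by omega
          have : coeff mB G = 0 := IH mB (by omega) hBc
          rw [this, mul_zero, mul_zero]
      have : c * coeff D G = 0 := by rw [← hmain, hT, hRHS]
      exact (mul_eq_zero.mp this).resolve_left hc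

end key

/-- a formal power series `G` in the variables `t^α_k`
(`α ∈ {1,…,N}`, `k ∈ ℕ`) satisfying the topological recursion relations with
respect to an invertible symmetric Gram matrix `g`, and whose 2-jet at the
origin vanishes, is tame: every Taylor coefficient
`∂_{α₁,k₁}⋯∂_{α_r,k_r} G (0)` with `k₁ + ⋯ + k_r > r − 3` vanishes. -/
theorem trr_implies_tame
    {K : Type*} [Field K] [CharZero K] {N : ℕ} (hN : 1 ≤ N)
    (g ginv : Matrix (Fin N) (Fin N) K)
    (hgsymm : g.transpose = g) (hginv : g * ginv = 1)
    (G : MvPowerSeries (Fin N × ℕ) K)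
    (hTRR : ∀ (α β γ : Fin N) (k l m : ℕ),
      fpderiv (α, k + 1) (fpderiv (β, l) (fpderiv (γ, m) G))
        = ∑ μ : Fin N, ∑ ν : Fin N,
            ginv μ ν •
              (fpderiv (α, k) (fpderiv (μ, 0) G)
                * fpderiv (ν, 0) (fpderiv (β, l) (fpderiv (γ, m) G))))
    (h0 : MvPowerSeries.coeff 0 G = 0)
    (h1 : ∀ v : Fin N × ℕ, MvPowerSeries.coeff 0 (fpderiv v G) = 0)
    (h2 : ∀ v w : Fin N × ℕ, MvPowerSeries.coeff 0 (fpderiv v (fpderiv w G)) = 0) :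
    ∀ (r : ℕ) (α : Fin r → Fin N) (k : Fin r → ℕ),
      r < (∑ i, k i) + 3 →
      MvPowerSeries.coeff 0 (fpderivIter (List.ofFn fun i => (α i, k i)) G) = 0 := by
  intro r α k hr
  set l : List (Fin N × ℕ) := List.ofFn (fun i => (α i, k i)) with hl
  have hds : dsize (monom l) = r := by
    rw [monom, hl, List.map_ofFn, map_list_sum, List.map_ofFn, List.sum_ofFn]
    simp [Function.comp, dsize_single]
  have hdw : dwt (monom l) = ∑ i, k i := by
    rw [monom, hl, List.map_ofFn, map_list_sum, List.map_ofFn, List.sum_ofFn]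
    simp [Function.comp, dwt_single]
  apply coeff_eq_of_coeff0_fpderivIter
  exact key ginv G hTRR h0 h1 h2 (dwt (monom l) + 1) (monom l) (by omega) (by omega)
end
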